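/- Let G and H be connected graphs, neither of which is a tree. Then max{|E(G)|·|V(H)|, |E(H)|·|V(G)|} + 2 ≤ mc(G □ H) ≤ |E(G)|·|V(H)| + (|E(H)| − 1)·|V(G)| + 1. -/

import Mathlib

open SimpleGraph

/-- An edge-coloring `c` of `G` is a *monochromatic connection coloring* (MC-coloring)
if any two vertices of `G` are joined by a monochromatic walk, i.e. a walk all of whose
edges receive the same color. -/
def SimpleGraph.IsMCColoring {V : Type*} (G : SimpleGraph V) (c : Sym2 V → ℕ) : Prop :=
  ∀ u v : V, ∃ w : G.Walk u v, ∃ k : ℕ, ∀ e ∈ w.edges, c e = k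

/-- The *monochromatic connection number* `mc G`: the maximum number of colors used
on the edges of `G` by an MC-coloring of `G`. -/
noncomputable def SimpleGraph.mc {V : Type*} (G : SimpleGraph V) : ℕ :=
  sSup {n | ∃ c : Sym2 V → ℕ, G.IsMCColoring c ∧ (c '' G.edgeSet).ncard = n}

/-- The lexicographic product `G ∘ H`: `(g,h)` and `(g',h')` are adjacent iff
`gg' ∈ E(G)`, or `g = g'` and `hh' ∈ E(H)`. -/
def SimpleGraph.lexProd {α β : Type*} (G : SimpleGraph α) (H : SimpleGraph β) :
    SimpleGraph (α × β) where
  Adj x y := G.Adj x.1 y.1 ∨ (x.1 = y.1 ∧ H.Adj x.2 y.2)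
  symm := by
    constructor
    rintro x y (h | ⟨h1, h2⟩)
    · exact Or.inl h.symm
    · exact Or.inr ⟨h1.symm, h2.symm⟩
  loopless := by
    constructor
    rintro x (h | ⟨-, h⟩)
    · exact G.loopless.irrefl _ h
    · exact H.loopless.irrefl _ h

/-- The strong product `G ⊠ H`: `(g,h)` and `(g',h')` are adjacent iff
`gg' ∈ E(G)` and `h = h'`, or `g = g'` and `hh' ∈ E(H)`, or `gg' ∈ E(G)` and `hh' ∈ E(H)`. -/
def SimpleGraph.strongProd {α β : Type*} (G : SimpleGraph α) (H : SimpleGraph β) :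
    SimpleGraph (α × β) where
  Adj x y := (G.Adj x.1 y.1 ∧ x.2 = y.2) ∨ (x.1 = y.1 ∧ H.Adj x.2 y.2) ∨
      (G.Adj x.1 y.1 ∧ H.Adj x.2 y.2)
  symm := by
    constructor
    rintro x y (⟨h1, h2⟩ | ⟨h1, h2⟩ | ⟨h1, h2⟩)
    · exact Or.inl ⟨h1.symm, h2.symm⟩
    · exact Or.inr (Or.inl ⟨h1.symm, h2.symm⟩)
    · exact Or.inr (Or.inr ⟨h1.symm, h2.symm⟩)
  loopless := by
    constructor
    rintro x (⟨h, -⟩ | ⟨-, h⟩ | ⟨h, -⟩)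
    · exact G.loopless.irrefl _ h
    · exact H.loopless.irrefl _ h
    · exact G.loopless.irrefl _ h

/-- The direct (tensor) product `G × H`: `(g,h)` and `(g',h')` are adjacent iff
`gg' ∈ E(G)` and `hh' ∈ E(H)`. -/
def SimpleGraph.tensorProd {α β : Type*} (G : SimpleGraph α) (H : SimpleGraph β) :
    SimpleGraph (α × β) where
  Adj x y := G.Adj x.1 y.1 ∧ H.Adj x.2 y.2
  symm := by
    constructor
    rintro x y ⟨h1, h2⟩
    exact ⟨h1.symm, h2.symm⟩
  loopless := by
    constructor
    rintro x ⟨h, -⟩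
    exact G.loopless.irrefl _ h

/-- The Cartesian (box) product of a finite family of graphs: two tuples are adjacent
iff they agree in all coordinates but one, where they are adjacent. -/
def SimpleGraph.piBoxProd {n : ℕ} {V : Fin n → Type*} (G : ∀ i, SimpleGraph (V i)) :
    SimpleGraph (∀ i, V i) where
  Adj x y := ∃ i, (G i).Adj (x i) (y i) ∧ ∀ j, j ≠ i → x j = y j
  symm := by
    constructor
    rintro x y ⟨i, hadj, heq⟩
    exact ⟨i, hadj.symm, fun j hj => (heq j hj).symm⟩
  loopless := by
    constructor
    rintro x ⟨i, hadj, -⟩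
    exact (G i).loopless.irrefl _ hadj

/-- The (iterated, left-associated) lexicographic product of a finite family of graphs:
two tuples are adjacent iff at the least coordinate where they differ,
they are adjacent. -/
def SimpleGraph.piLexProd {n : ℕ} {V : Fin n → Type*} (G : ∀ i, SimpleGraph (V i)) :
    SimpleGraph (∀ i, V i) where
  Adj x y := ∃ i, (G i).Adj (x i) (y i) ∧ ∀ j, j < i → x j = y j
  symm := by
    constructor
    rintro x y ⟨i, hadj, heq⟩
    exact ⟨i, hadj.symm, fun j hj => (heq j hj).symm⟩
  loopless := by
    constructor
    rintro x ⟨i, hadj, -⟩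
    exact (G i).loopless.irrefl _ hadj

/-!
Two estimates hold for every finite graph `K`. If `K` is connected, then
`|E(K)| - |V(K)| + 2 ≤ mc(K)`: colour a spanning tree with one colour and give every other edge
a colour of its own. Conversely, let `c` be an MC-colouring, `u` a vertex and `S` a set of
vertices not adjacent to `u`. The edges of each colour `j` connect `u` to the vertices of `S`
reached from `u` in colour `j`; since `u` has no neighbour in `S`, they form at least one more
edge than there are such vertices. Summing over the colours gives `#colours + |S| ≤ |E(K)|`.

For `K = G □ H` take `u = (g₀, x)` and `S = {(g, y) | g ≠ g₀}` with `x ≠ y`, and use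
`|E(G □ H)| = |E(G)||V(H)| + |E(H)||V(G)|`. A connected graph that is not a tree has at least
as many edges as vertices, so `|V(G)||V(H)|` is at most each of the two summands.
-/

namespace SimpleGraph

variable {V : Type*} {K : SimpleGraph V}

lemma Connected.card_le_ncard_edgeSet_of_not_isTree [Finite V] (hK : K.Connected)
    (hT : ¬K.IsTree) : Nat.card V ≤ K.edgeSet.ncard := by
  rw [isTree_iff_connected_and_card, not_and] at hT
  have h₁ := hK.card_vert_le_card_edgeSet_add_one
  have h₂ := hT hK
  rw [Nat.card_coe_set_eq] at h₁ h₂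
  omega

lemma Connected.nontrivial_of_not_isTree (hK : K.Connected) (hT : ¬K.IsTree) : Nontrivial V := by
  by_contra h
  rw [not_nontrivial_iff_subsingleton] at h
  exact hT ⟨hK, fun _ c hc => (c.adj_snd hc.not_nil).ne (Subsingleton.elim _ _)⟩

lemma card_le_ncard_edgeSet_of_reachable [Finite V] {u : V} {S : Finset V} (hu : u ∉ S)
    (hS : ∀ v ∈ S, K.Reachable u v) : S.card ≤ K.edgeSet.ncard := by
  classical
  set C := K.connectedComponentMk u
  have hsupp : ↑(insert u S) ⊆ C.supp := by
    intro v hv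
    rcases Finset.mem_insert.1 hv with rfl | hv
    · rfl
    · exact ConnectedComponent.eq.2 (hS v hv).symm
  have hvert : S.card + 1 ≤ Nat.card C := by
    rw [← Finset.card_insert_of_notMem hu, ← Set.ncard_coe_finset]
    exact Set.ncard_le_ncard hsupp
  have hedge : Nat.card C.toSimpleGraph.edgeSet ≤ K.edgeSet.ncard :=
    Nat.card_le_card_of_injective _
      (Hom.mapEdgeSet.injective C.toSimpleGraph_hom Subtype.val_injective)
  have := C.connected_toSimpleGraph.card_vert_le_card_edgeSet_add_one
  omega

lemma card_add_one_le_ncard_edgeSet_of_reachable [Finite V] {u : V} {S : Finset V}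
    (hne : S.Nonempty) (hu : u ∉ S) (hS : ∀ v ∈ S, K.Reachable u v)
    (hadj : ∀ v ∈ S, ¬K.Adj u v) : S.card + 1 ≤ K.edgeSet.ncard := by
  classical
  obtain ⟨v, hv⟩ := hne
  obtain ⟨w⟩ := hS v hv
  have hz := w.adj_snd (Walk.not_nil_of_ne fun h => hu (h ▸ hv))
  have hzS : w.snd ∉ S := fun h => hadj _ h hz
  rw [← Finset.card_insert_of_notMem hzS]
  refine card_le_ncard_edgeSet_of_reachable (u := u) ?_ fun x hx => ?_
  · simp [hu, hz.ne]
  · rcases Finset.mem_insert.1 hx with rfl | hx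
    exacts [hz.reachable, hS x hx]

def colorClass (K : SimpleGraph V) (c : Sym2 V → ℕ) (j : ℕ) : SimpleGraph V :=
  fromEdgeSet {e ∈ K.edgeSet | c e = j}

lemma edgeSet_colorClass (c : Sym2 V → ℕ) (j : ℕ) :
    (K.colorClass c j).edgeSet = {e ∈ K.edgeSet | c e = j} := by
  rw [colorClass, edgeSet_fromEdgeSet, sdiff_eq_left, Set.disjoint_left]
  exact fun e he => K.not_isDiag_of_mem_edgeSet he.1

lemma colorClass_le (c : Sym2 V → ℕ) (j : ℕ) : K.colorClass c j ≤ K := fun _ _ h =>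
  K.mem_edgeSet.1 (edgeSet_colorClass (K := K) c j ▸ (K.colorClass c j).mem_edgeSet.2 h).1

lemma Walk.reachable_colorClass {c : Sym2 V → ℕ} {j : ℕ} {u v : V} (w : K.Walk u v)
    (hw : ∀ e ∈ w.edges, c e = j) : (K.colorClass c j).Reachable u v :=
  ⟨w.transfer _ fun e he => by
    rw [edgeSet_colorClass]
    exact ⟨w.edges_subset_edgeSet he, hw e he⟩⟩

theorem IsMCColoring.ncard_image_add_card_le [Finite V] {c : Sym2 V → ℕ}
    (hc : K.IsMCColoring c) {u : V} {S : Finset V} (hu : u ∉ S) (hS : ∀ v ∈ S, ¬K.Adj u v) :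
    (c '' K.edgeSet).ncard + S.card ≤ K.edgeSet.ncard := by
  classical
  have := Fintype.ofFinite V
  choose w κ hκ using hc u
  set C := K.edgeFinset.image c
  have hκC : ∀ v ∈ S, κ v ∈ C := fun v hv => by
    have he := (w v).mk_start_snd_mem_edges (Walk.not_nil_of_ne fun h => hu (h ▸ hv))
    exact Finset.mem_image.2 ⟨_, K.mem_edgeFinset.2 ((w v).edges_subset_edgeSet he), hκ v _ he⟩
  have hclass : ∀ j ∈ C, (S.filter (κ · = j)).card + 1 ≤ (K.edgeFinset.filter (c · = j)).card := by
    intro j hj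
    rcases (S.filter (κ · = j)).eq_empty_or_nonempty with hS₀ | hS₀
    · obtain ⟨e, he, rfl⟩ := Finset.mem_image.1 hj
      rw [hS₀, Finset.card_empty, zero_add]
      exact Finset.card_pos.2 ⟨e, Finset.mem_filter.2 ⟨he, rfl⟩⟩
    have hcard : (K.edgeFinset.filter (c · = j)).card = (K.colorClass c j).edgeSet.ncard := by
      simp only [edgeSet_colorClass, ← Set.ncard_coe_finset, Finset.coe_filter, mem_edgeFinset]
    rw [hcard]
    refine card_add_one_le_ncard_edgeSet_of_reachable hS₀ (fun h => hu (Finset.mem_filter.1 h).1)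
      (fun v hv => ?_) fun v hv h => hS v (Finset.mem_filter.1 hv).1 (colorClass_le c j h)
    obtain ⟨-, rfl⟩ := Finset.mem_filter.1 hv
    exact (w v).reachable_colorClass (hκ v)
  calc (c '' K.edgeSet).ncard + S.card = ∑ j ∈ C, ((S.filter (κ · = j)).card + 1) := by
        rw [Finset.sum_add_distrib, ← Finset.card_eq_sum_card_fiberwise hκC, Finset.sum_const,
          smul_eq_mul, mul_one, ← coe_edgeFinset, ← Finset.coe_image, Set.ncard_coe_finset,
          add_comm]
    _ ≤ ∑ j ∈ C, (K.edgeFinset.filter (c · = j)).card := Finset.sum_le_sum hclass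
    _ = K.edgeSet.ncard := by
        rw [← Finset.card_eq_sum_card_fiberwise fun e he => Finset.mem_image_of_mem c he,
          ← Set.ncard_coe_finset, coe_edgeFinset]

theorem Connected.exists_isMCColoring [Finite V] [Nontrivial V] (hK : K.Connected) :
    ∃ c, K.IsMCColoring c ∧ K.edgeSet.ncard + 2 ≤ (c '' K.edgeSet).ncard + Nat.card V := by
  classical
  obtain ⟨T, hTK, hT⟩ := hK.exists_isTree_le
  obtain ⟨enc, henc⟩ := exists_injective_nat (Sym2 V)
  have hTE : T.edgeSet ⊆ K.edgeSet := edgeSet_mono hTK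
  have hTcard : T.edgeSet.ncard + 1 = Nat.card V := (isTree_iff_connected_and_card.1 hT).2
  have hT₀ : T.edgeSet.Nonempty :=
    Set.nonempty_of_ncard_ne_zero (by have := Finite.one_lt_card (α := V); omega)
  let c : Sym2 V → ℕ := fun e => if e ∈ T.edgeSet then 0 else enc e + 1
  have himage : c '' K.edgeSet = insert 0 (c '' (K.edgeSet \ T.edgeSet)) := by
    ext n
    constructor
    · rintro ⟨e, he, rfl⟩
      by_cases heT : e ∈ T.edgeSet
      · simp [c, heT]
      · exact Or.inr ⟨e, ⟨he, heT⟩, rfl⟩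
    · rintro (rfl | ⟨e, ⟨he, -⟩, rfl⟩)
      · obtain ⟨e, he⟩ := hT₀
        exact ⟨e, hTE he, by simp [c, he]⟩
      · exact ⟨e, he, rfl⟩
  have hinj : Set.InjOn c (K.edgeSet \ T.edgeSet) := fun a ha b hb hab => by
    simp only [c, if_neg ha.2, if_neg hb.2, add_left_inj] at hab
    exact henc hab
  have h₀ : 0 ∉ c '' (K.edgeSet \ T.edgeSet) := by
    rintro ⟨e, ⟨-, heT⟩, he⟩
    simp [c, heT] at he
  refine ⟨c, fun u v => ?_, ?_⟩
  · obtain ⟨w⟩ := hT.connected u v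
    refine ⟨w.mapLe hTK, 0, fun e he => ?_⟩
    rw [Walk.edges_mapLe_eq_edges] at he
    simp [c, w.edges_subset_edgeSet he]
  · rw [himage, Set.ncard_insert_of_notMem h₀, hinj.ncard_image, Set.ncard_sdiff hTE]
    have := Set.ncard_le_ncard hTE
    omega

lemma IsMCColoring.ncard_image_le_mc [Finite V] {c : Sym2 V → ℕ} (hc : K.IsMCColoring c) :
    (c '' K.edgeSet).ncard ≤ K.mc :=
  le_csSup ⟨K.edgeSet.ncard, by
    rintro n ⟨c, -, rfl⟩
    exact Set.ncard_image_le⟩ ⟨c, hc, rfl⟩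

theorem Connected.ncard_edgeSet_add_two_le_mc_add_card [Finite V] [Nontrivial V]
    (hK : K.Connected) : K.edgeSet.ncard + 2 ≤ K.mc + Nat.card V := by
  obtain ⟨c, hc, hcard⟩ := hK.exists_isMCColoring
  have := hc.ncard_image_le_mc
  omega

theorem Preconnected.mc_add_card_le [Finite V] (hK : K.Preconnected) {u : V} {S : Finset V}
    (hu : u ∉ S) (hS : ∀ v ∈ S, ¬K.Adj u v) : K.mc + S.card ≤ K.edgeSet.ncard := by
  have hconst : K.IsMCColoring fun _ => 0 := fun u v => ⟨(hK u v).some, 0, fun _ _ => rfl⟩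
  have := hconst.ncard_image_add_card_le hu hS
  suffices K.mc ≤ K.edgeSet.ncard - S.card by omega
  refine csSup_le' ?_
  rintro n ⟨c, hc, rfl⟩
  have := hc.ncard_image_add_card_le hu hS
  omega

section BoxProd

variable {α β : Type*} [Finite α] [Finite β] (G : SimpleGraph α) (H : SimpleGraph β)

theorem ncard_edgeSet_boxProd :
    (G □ H).edgeSet.ncard = G.edgeSet.ncard * Nat.card β + H.edgeSet.ncard * Nat.card α := by
  classical
  have := Fintype.ofFinite α
  have := Fintype.ofFinite β
  simp only [← coe_edgeFinset, Set.ncard_coe_finset, Nat.card_eq_fintype_card]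
  have hsum : 2 * (G □ H).edgeFinset.card =
      Fintype.card β * (2 * G.edgeFinset.card) + Fintype.card α * (2 * H.edgeFinset.card) := by
    simp only [← sum_degrees_eq_twice_card_edges, degree_boxProd, Finset.sum_add_distrib]
    have hG (f : α → ℕ) : ∑ v : α × β, f v.1 = Fintype.card β * ∑ a, f a := by
      simp [Fintype.sum_prod_type, Finset.sum_mul, mul_comm]
    have hH (f : β → ℕ) : ∑ v : α × β, f v.2 = Fintype.card α * ∑ b, f b := by
      simp [Fintype.sum_prod_type_right, Finset.sum_mul, mul_comm]
    rw [hG fun a => G.degree a, hH fun b => H.degree b]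
  linarith

theorem mc_boxProd_add_card_le [Nonempty α] [Nontrivial β] (hG : G.Preconnected)
    (hH : H.Preconnected) : (G □ H).mc + Nat.card α ≤ (G □ H).edgeSet.ncard + 1 := by
  classical
  have := Fintype.ofFinite α
  obtain ⟨g₀⟩ := ‹Nonempty α›
  obtain ⟨x, y, hxy⟩ := exists_pair_ne β
  have h := (hG.boxProd hH).mc_add_card_le (u := (g₀, x))
    (S := (Finset.univ.erase g₀).map ⟨(·, y), fun _ _ h => congrArg Prod.fst h⟩) ?_ ?_
  · rw [Finset.card_map, Finset.card_erase_of_mem (Finset.mem_univ _), Finset.card_univ,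
      ← Nat.card_eq_fintype_card] at h
    have := Nat.card_pos (α := α)
    omega
  · intro h
    obtain ⟨g, -, hg⟩ := Finset.mem_map.1 h
    exact hxy (congrArg Prod.snd hg).symm
  · simp only [Finset.mem_map, Finset.mem_erase, Finset.mem_univ, and_true,
      forall_exists_index, and_imp]
    rintro _ g hg rfl hadj
    rcases boxProd_adj.1 hadj with ⟨-, h⟩ | ⟨-, h⟩
    exacts [hxy h, hg h.symm]

end BoxProd

end SimpleGraph

/-- Theorem 2.1(1): if neither `G` nor `H` is a tree, then
`max{|E(G)||V(H)|, |E(H)||V(G)|} + 2 ≤ mc(G □ H) ≤ |E(G)||V(H)| + (|E(H)| - 1)|V(G)| + 1`. -/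
theorem mc_boxProd_of_not_tree {α β : Type*} [Fintype α] [Fintype β]
    (G : SimpleGraph α) (H : SimpleGraph β)
    (hG : G.Connected) (hH : H.Connected)
    (hGt : ¬ G.IsTree) (hHt : ¬ H.IsTree) :
    max (G.edgeSet.ncard * Nat.card β) (H.edgeSet.ncard * Nat.card α) + 2 ≤
        (G.boxProd H).mc ∧
      (G.boxProd H).mc ≤
        G.edgeSet.ncard * Nat.card β + (H.edgeSet.ncard - 1) * Nat.card α + 1 := by
  have := hG.nonempty
  have := hH.nonempty
  have := hG.nontrivial_of_not_isTree hGt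
  have := hH.nontrivial_of_not_isTree hHt
  have hVG : Nat.card α * Nat.card β ≤ G.edgeSet.ncard * Nat.card β :=
    Nat.mul_le_mul_right _ (hG.card_le_ncard_edgeSet_of_not_isTree hGt)
  have hVH : Nat.card α * Nat.card β ≤ H.edgeSet.ncard * Nat.card α := by
    rw [mul_comm]
    exact Nat.mul_le_mul_right _ (hH.card_le_ncard_edgeSet_of_not_isTree hHt)
  have hE := ncard_edgeSet_boxProd G H
  have hlower := (hG.boxProd hH).ncard_edgeSet_add_two_le_mc_add_card
  have hupper := mc_boxProd_add_card_le G H hG.preconnected hH.preconnected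
  rw [Nat.card_prod] at hlower
  rw [Nat.sub_mul, one_mul]
  have := Nat.card_pos (α := α)
  constructor <;> omega
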